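/- arXiv:1303.0171 — 4 statements merged into one kernel-verified Lean document; each statement's English description precedes it below -/
import Mathlib

section
/- Let X be a G-space and A⊆X a closed invariant subset. Then the A/G-LS category of the orbit space X/G is at most the A-LS G-category of X: _{A/G}cat(X/G) ≤ _Acat_G(X). -/
open unitInterval Set

namespace PaperTC

variable (G : Type*) {X : Type*} [Group G] [TopologicalSpace X] [MulAction G X]

/-- A set is invariant under the `G`-action. -/
def InvSet (U : Set X) : Prop := ∀ (g : G), ∀ x ∈ U, g • x ∈ U

/-- An open invariant set `U` is `G`-compressible into `A`: the inclusion `U ⊆ X` is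
`G`-homotopic to a map with values in `A`. -/
def Compressible (A U : Set X) : Prop :=
  ∃ H : C(↥U × I, X),
    (∀ u : ↥U, H (u, 0) = (u : X)) ∧
    (∀ u : ↥U, H (u, 1) ∈ A) ∧
    (∀ (g : G) (u v : ↥U) (t : I), (v : X) = g • (u : X) → H (v, t) = g • H (u, t))

/-- `X` can be covered by `n` open invariant sets, each `G`-compressible into `A`. -/
def CatLE (A : Set X) (n : ℕ) : Prop :=
  ∃ U : Fin n → Set X, (⋃ i, U i) = Set.univ ∧
    ∀ i, IsOpen (U i) ∧ InvSet G (U i) ∧ Compressible G A (U i)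

/-- The `A`-Lusternik–Schnirelmann `G`-category of `X`. -/
noncomputable def Cat (A : Set X) : ℕ∞ :=
  sInf {n : ℕ∞ | ∃ m : ℕ, n = (m : ℕ∞) ∧ CatLE G A m}

/-- Non-equivariant compressibility of `U` into `A`. -/
def NCompressible {Z : Type*} [TopologicalSpace Z] (A U : Set Z) : Prop :=
  ∃ H : C(↥U × I, Z),
    (∀ u : ↥U, H (u, 0) = (u : Z)) ∧ (∀ u : ↥U, H (u, 1) ∈ A)

def NCatLE {Z : Type*} [TopologicalSpace Z] (A : Set Z) (n : ℕ) : Prop :=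
  ∃ U : Fin n → Set Z, (⋃ i, U i) = Set.univ ∧
    ∀ i, IsOpen (U i) ∧ NCompressible A (U i)

/-- The (non-equivariant) `A`-Lusternik–Schnirelmann category. -/
noncomputable def NCat {Z : Type*} [TopologicalSpace Z] (A : Set Z) : ℕ∞ :=
  sInf {n : ℕ∞ | ∃ m : ℕ, n = (m : ℕ∞) ∧ NCatLE A m}

section Aux

variable {G : Type*} {X : Type*} [Group G] [TopologicalSpace X] [MulAction G X]

/-- The preimage of the image of an invariant set under the orbit quotient map is itself. -/
lemma aux_saturated {U : Set X} (hU : InvSet G U) :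
    (Quotient.mk (MulAction.orbitRel G X)) ⁻¹' ((Quotient.mk (MulAction.orbitRel G X)) '' U)
      = U := by
  ext x
  constructor
  · rintro ⟨u, hu, h⟩
    have h2 : u ∈ MulAction.orbit G x := Quotient.exact h
    obtain ⟨g, rfl⟩ := h2
    simpa using hU g⁻¹ _ hu
  · exact fun hx => ⟨x, hx, rfl⟩

lemma aux_catle {A : Set X} {n : ℕ} (h : CatLE G A n) :
    NCatLE ((Quotient.mk (MulAction.orbitRel G X)) '' A) n := by
  classical
  set q : X → Quotient (MulAction.orbitRel G X) := Quotient.mk (MulAction.orbitRel G X) with hq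
  have hqc : Continuous q := continuous_quotient_mk'
  have hqm : Topology.IsQuotientMap q := isQuotientMap_quotient_mk'
  obtain ⟨U, hcov, hprop⟩ := h
  refine ⟨fun i => q '' U i, ?_, fun i => ?_⟩
  · apply Set.eq_univ_of_forall
    intro z
    obtain ⟨x, rfl⟩ := hqm.surjective z
    have : x ∈ ⋃ i, U i := hcov ▸ Set.mem_univ x
    obtain ⟨_, ⟨i, rfl⟩, hx⟩ := this
    exact Set.mem_iUnion.2 ⟨i, x, hx, rfl⟩
  obtain ⟨hUo, hUinv, H, h0, h1, heq⟩ := hprop i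
  have hsat : q ⁻¹' (q '' U i) = U i := aux_saturated hUinv
  have hVo : IsOpen (q '' U i) := by
    rw [← hqm.isOpen_preimage, hsat]; exact hUo
  refine ⟨hVo, ?_⟩
  -- the restricted quotient map
  let p : ↥(U i) → ↥(q '' U i) := fun u => ⟨q u, Set.mem_image_of_mem q u.2⟩
  have hpq : Topology.IsQuotientMap p := by
    have h1 : Topology.IsQuotientMap ((q '' U i).restrictPreimage q) :=
      hqm.restrictPreimage_isOpen hVo
    have h2 : p = ((q '' U i).restrictPreimage q) ∘ (Homeomorph.setCongr hsat).symm := by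
      funext u; rfl
    rw [h2]
    exact h1.comp (Homeomorph.setCongr hsat).symm.isQuotientMap
  have hps : Function.Surjective p := fun v => by
    obtain ⟨x, hx, hqx⟩ := v.2
    exact ⟨⟨x, hx⟩, Subtype.ext hqx⟩
  -- a (possibly discontinuous) section of p
  let s : ↥(q '' U i) → ↥(U i) := fun v => (hps v).choose
  have hs : ∀ v, p (s v) = v := fun v => (hps v).choose_spec
  -- the descended homotopy
  let K : ↥(q '' U i) × I → Quotient (MulAction.orbitRel G X) :=
    fun w => q (H (s w.1, w.2))
  have hKlift : ∀ (u : ↥(U i)) (t : I), K (p u, t) = q (H (u, t)) := by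
    intro u t
    have h3 : q ((s (p u) : X)) = q (u : X) := congrArg Subtype.val (hs (p u))
    have h5 : ((s (p u) : X)) ∈ MulAction.orbit G (u : X) := Quotient.exact h3
    obtain ⟨g, hg⟩ := h5
    have h6 : H (s (p u), t) = g • H (u, t) := heq g u (s (p u)) t hg.symm
    show q (H (s (p u), t)) = q (H (u, t))
    rw [h6]
    exact Quotient.sound (MulAction.mem_orbit _ g)
  have hKc : Continuous K := by
    apply hpq.continuous_lift_prod_left (f := p)
    have : (fun w : ↥(U i) × I => K (p w.1, w.2)) = fun w => q (H (w.1, w.2)) := by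
      funext w; exact hKlift w.1 w.2
    rw [this]
    exact hqc.comp (H.continuous.comp (by fun_prop))
  refine ⟨⟨K, hKc⟩, fun v => ?_, fun v => ?_⟩
  · show K (v, 0) = (v : Quotient (MulAction.orbitRel G X))
    have : K (p (s v), 0) = q (H (s v, 0)) := hKlift (s v) 0
    rw [hs] at this
    rw [this, h0 (s v)]
    exact congrArg Subtype.val (hs v)
  · show K (v, 1) ∈ q '' A
    have : K (p (s v), 1) = q (H (s v, 1)) := hKlift (s v) 1
    rw [hs] at this
    rw [this]
    exact Set.mem_image_of_mem q (h1 (s v))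

end Aux

/-- `_{A/G} cat(X/G) ≤ _A cat_G(X)`. -/
theorem stmt_2 {G X : Type*} [Group G] [TopologicalSpace G] [CompactSpace G]
    [TopologicalSpace X] [MulAction G X]
    (A : Set X) (hA : IsClosed A) (hAinv : InvSet G A) :
    NCat ((Quotient.mk (MulAction.orbitRel G X)) '' A) ≤ Cat G A := by
  apply sInf_le_sInf
  rintro n ⟨m, rfl, hm⟩
  exact ⟨m, rfl, aux_catle hm⟩

end PaperTC
end

section
/- Let X be a G-space, A⊆X a closed invariant subset, and H a closed subgroup of G. Then _{A^H}cat_H(X^H) ≤ _Acat_G(X), where X^H and A^H denote the H-fixed point sets (with the residual action considered). -/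
open unitInterval Set

namespace PaperTC

variable (G : Type*) {X : Type*} [Group G] [TopologicalSpace X] [MulAction G X]

/-- The residual action of `H` on the `H`-fixed point set `X^H` (it is trivial
on `X^H`, i.e. each `h ∈ H` acts as it does on `X`, fixing every point). -/
def fixedAction {G : Type*} (X : Type*) [Group G] [TopologicalSpace X] [MulAction G X]
    (H : Subgroup G) : MulAction ↥H ↥(MulAction.fixedPoints ↥H X) where
  smul h x := ⟨h • (x : X), by
    intro h'
    have hx := x.2 h
    rw [hx]
    exact x.2 h'⟩
  one_smul x := by ext; exact one_smul _ (x : X)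
  mul_smul h₁ h₂ x := by ext; exact mul_smul h₁ h₂ (x : X)

section FixedPoints

attribute [local instance] fixedAction

variable {G X : Type*} [Group G] [TopologicalSpace X] [MulAction G X] (H : Subgroup G)

local notation "Xᴴ" => MulAction.fixedPoints H X

theorem InvSet.preimage_val_fixedPoints {U : Set X} (hU : InvSet G U) :
    InvSet H ((Subtype.val : Xᴴ → X) ⁻¹' U) :=
  fun h x hx => hU h x hx

theorem Compressible.preimage_val_fixedPoints {A U : Set X} (hU : Compressible G A U) :
    Compressible H ((Subtype.val : Xᴴ → X) ⁻¹' A) ((Subtype.val : Xᴴ → X) ⁻¹' U) := by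
  obtain ⟨F, hF0, hF1, hFeq⟩ := hU
  let incl : (Subtype.val : Xᴴ → X) ⁻¹' U → U := fun u => ⟨u.1, u.2⟩
  -- equivariance turns `x = h • x` into `F (x, t) = h • F (x, t)`
  have hfix (u : (Subtype.val : Xᴴ → X) ⁻¹' U) (t : I) : F (incl u, t) ∈ Xᴴ :=
    fun h => (hFeq h (incl u) (incl u) t (u.1.2 h).symm).symm
  refine ⟨⟨fun p => ⟨F (incl p.1, p.2), hfix p.1 p.2⟩, ?_⟩, ?_, fun u => hF1 (incl u), ?_⟩
  · exact (F.continuous.comp (by fun_prop)).subtype_mk _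
  · exact fun u => Subtype.ext (hF0 (incl u))
  · exact fun h u v t hvu => Subtype.ext (hFeq h (incl u) (incl v) t (congrArg Subtype.val hvu))

theorem CatLE.preimage_val_fixedPoints {A : Set X} {n : ℕ} (hn : CatLE G A n) :
    CatLE H ((Subtype.val : Xᴴ → X) ⁻¹' A) n := by
  obtain ⟨U, hcover, hU⟩ := hn
  refine ⟨fun i => Subtype.val ⁻¹' U i, by rw [← preimage_iUnion, hcover, preimage_univ],
    fun i => ?_⟩
  obtain ⟨hopen, hinv, hcomp⟩ := hU i
  exact ⟨hopen.preimage continuous_subtype_val, hinv.preimage_val_fixedPoints H,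
    hcomp.preimage_val_fixedPoints H⟩

end FixedPoints

theorem stmt_4_general {G X : Type*} [Group G]
    [TopologicalSpace X] [MulAction G X]
    (H : Subgroup G)
    (A : Set X) :
    (@Cat ↥H ↥(MulAction.fixedPoints ↥H X) _ _ (fixedAction X H)
      ((Subtype.val : ↥(MulAction.fixedPoints ↥H X) → X) ⁻¹' A)) ≤ Cat G A := by
  apply sInf_le_sInf
  rintro n ⟨m, rfl, hm⟩
  exact ⟨m, rfl, hm.preimage_val_fixedPoints H⟩

/-- `_{A^H} cat_H(X^H) ≤ _A cat_G(X)`. -/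
theorem stmt_4 {G X : Type*} [Group G] [TopologicalSpace G] [CompactSpace G]
    [TopologicalSpace X] [MulAction G X]
    (H : Subgroup G) (hH : IsClosed (H : Set G))
    (A : Set X) (hA : IsClosed A) (hAinv : InvSet G A) :
    (@Cat ↥H ↥(MulAction.fixedPoints ↥H X) _ _ (fixedAction X H)
      ((Subtype.val : ↥(MulAction.fixedPoints ↥H X) → X) ⁻¹' A)) ≤ Cat G A :=
  stmt_4_general H A

end PaperTC
end

section
/- For a G-space X, the following are equivalent: (1) TC_G(X) ≤ n; (2) there exist n open invariant sets U_1,…,U_n covering X×X and maps s̄_i:U_i→PX with p∘s̄_i G-homotopic to the inclusion U_i⊆X×X; (3) _{Δ(X)}cat_G(X×X) ≤ n. -/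
open unitInterval Set

namespace PaperTC

variable (G : Type*) {X : Type*} [Group G] [TopologicalSpace X] [MulAction G X]

/-- `TC_G(X) ≤ n`: `X × X` (diagonal `G`-action) is covered by `n` open invariant
sets each admitting a `G`-equivariant section of the path fibration `p : PX → X × X`. -/
def TCGLE (G : Type*) (X : Type*) [Group G] [TopologicalSpace X] [MulAction G X]
    (n : ℕ) : Prop :=
  ∃ U : Fin n → Set (X × X), (⋃ i, U i) = Set.univ ∧
    ∀ i, IsOpen (U i) ∧ InvSet G (U i) ∧
      ∃ s : C(↥(U i), C(I, X)),
        (∀ u : ↥(U i), (s u 0, s u 1) = (u : X × X)) ∧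
        (∀ (g : G) (u v : ↥(U i)) (t : I), (v : X × X) = g • (u : X × X) →
          s v t = g • s u t)

/-- The equivariant topological complexity `TC_G(X)`. -/
noncomputable def TCG (G : Type*) (X : Type*) [Group G] [TopologicalSpace X]
    [MulAction G X] : ℕ∞ :=
  sInf {n : ℕ∞ | ∃ m : ℕ, n = (m : ℕ∞) ∧ TCGLE G X m}

noncomputable def pj (r : ℝ) : I := Set.projIcc 0 1 zero_le_one r

lemma pj_cont : Continuous pj := by unfold pj; exact continuous_projIcc

lemma pj_zero : pj 0 = 0 := by simp [pj, Set.projIcc_left]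
lemma pj_one : pj 1 = 1 := by simp [pj, Set.projIcc_right]

noncomputable def pcat {D X : Type*} (A B : D × I → X) : D × I → X :=
  fun d => if ((d.2 : ℝ)) ≤ 1/2 then A (d.1, pj (2*(d.2:ℝ))) else B (d.1, pj (2*(d.2:ℝ)-1))

lemma pcat_cont {D X : Type*} [TopologicalSpace D] [TopologicalSpace X]
    {A B : D × I → X} (hA : Continuous A) (hB : Continuous B)
    (hAB : ∀ d, A (d, 1) = B (d, 0)) : Continuous (pcat A B) := by
  apply Continuous.if_le
  · exact hA.comp (continuous_fst.prodMk (pj_cont.comp (by fun_prop)))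
  · exact hB.comp (continuous_fst.prodMk (pj_cont.comp (by fun_prop)))
  · fun_prop
  · fun_prop
  · intro d h
    have h2 : 2*((d.2:I):ℝ) = 1 := by rw [h]; ring
    rw [h2, show (1:ℝ)-1 = 0 by norm_num, pj_one, pj_zero]
    exact hAB d.1

lemma pcat_zero {D X : Type*} (A B : D × I → X) (d : D) : pcat A B (d, 0) = A (d, 0) := by
  simp only [pcat]; norm_num; rw [pj_zero]

lemma pcat_one {D X : Type*} (A B : D × I → X) (d : D) : pcat A B (d, 1) = B (d, 1) := by
  simp only [pcat]; norm_num; rw [pj_one]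

lemma pcat_equiv {D X G : Type*} [SMul G X] {A B : D × I → X} (g : G) (u v : D)
    (hA : ∀ t, A (v, t) = g • A (u, t)) (hB : ∀ t, B (v, t) = g • B (u, t)) (t : I) :
    pcat A B (v, t) = g • pcat A B (u, t) := by
  simp only [pcat]
  split_ifs with h
  · exact hA _
  · exact hB _


/-- equivalence of (1) `TC_G(X) ≤ n`, (2) existence of `n` open
invariant sets covering `X × X` with maps to `PX` whose composition with `p` is
`G`-homotopic to the inclusion, and (3) `_{Δ(X)} cat_G(X × X) ≤ n`. -/
theorem stmt_11 {G X : Type*} [Group G] [TopologicalSpace G] [CompactSpace G]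
    [TopologicalSpace X] [MulAction G X] [ContinuousSMul G X] (n : ℕ) :
    (TCGLE G X n ↔
      (∃ U : Fin n → Set (X × X), (⋃ i, U i) = Set.univ ∧
        ∀ i, IsOpen (U i) ∧ InvSet G (U i) ∧
          ∃ s : C(↥(U i), C(I, X)),
            (∀ (g : G) (u v : ↥(U i)) (t : I), (v : X × X) = g • (u : X × X) →
              s v t = g • s u t) ∧
            ∃ K : C(↥(U i) × I, X × X),
              (∀ u : ↥(U i), K (u, 0) = (s u 0, s u 1)) ∧
              (∀ u : ↥(U i), K (u, 1) = (u : X × X)) ∧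
              (∀ (g : G) (u v : ↥(U i)) (t : I), (v : X × X) = g • (u : X × X) →
                K (v, t) = g • K (u, t)))) ∧
    (TCGLE G X n ↔ CatLE G (Set.diagonal X) n) := by
  constructor
  · constructor
    · rintro ⟨U, hcov, hU⟩
      refine ⟨U, hcov, fun i => ?_⟩
      obtain ⟨ho, hinv, s, hsec, heq⟩ := hU i
      refine ⟨ho, hinv, s, heq,
        ⟨⟨fun p => (p.1 : X × X), by fun_prop⟩, fun u => ?_, fun u => rfl,
          fun g u v t hvu => hvu⟩⟩
      simp only [ContinuousMap.coe_mk]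
      exact (hsec u).symm
    · rintro ⟨U, hcov, hU⟩
      refine ⟨U, hcov, fun i => ?_⟩
      obtain ⟨ho, hinv, s, heq, K, hK0, hK1, hKeq⟩ := hU i
      set P1 : ↥(U i) × I → X := fun d => (K (d.1, σ d.2)).1 with hP1def
      set P2 : ↥(U i) × I → X := fun d => s d.1 d.2 with hP2def
      set P3 : ↥(U i) × I → X := fun d => (K d).2 with hP3def
      have hP1 : Continuous P1 :=
        continuous_fst.comp (K.continuous.comp
          (continuous_fst.prodMk (continuous_symm.comp continuous_snd)))
      have hP2 : Continuous P2 := s.uncurry.continuous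
      have hP3 : Continuous P3 := continuous_snd.comp K.continuous
      have j12 : ∀ d, P1 (d, 1) = P2 (d, 0) := by
        intro d
        simp only [hP1def, hP2def, symm_one, hK0 d]
      have hF12 := pcat_cont hP1 hP2 j12
      have j23 : ∀ d, pcat P1 P2 (d, 1) = P3 (d, 0) := by
        intro d
        rw [pcat_one]
        simp only [hP2def, hP3def, hK0 d]
      set F : ↥(U i) × I → X := pcat (pcat P1 P2) P3 with hFdef
      have hF : Continuous F := pcat_cont hF12 hP3 j23
      refine ⟨ho, hinv, (ContinuousMap.mk F hF).curry, fun u => ?_, fun g u v t hvu => ?_⟩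
      · have h0 : F (u, 0) = (u : X × X).1 := by
          rw [hFdef, pcat_zero, pcat_zero]
          simp only [hP1def, symm_zero, hK1 u]
        have h1 : F (u, 1) = (u : X × X).2 := by
          rw [hFdef, pcat_one]
          simp only [hP3def, hK1 u]
        have : ((ContinuousMap.mk F hF).curry u 0, (ContinuousMap.mk F hF).curry u 1)
            = (F (u, 0), F (u, 1)) := rfl
        rw [this, h0, h1]
      · show F (v, t) = g • F (u, t)
        refine pcat_equiv g u v (fun t => pcat_equiv g u v (fun t => ?_) (fun t => ?_) t)
          (fun t => ?_) t
        · simp only [hP1def]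
          rw [hKeq g u v _ hvu, Prod.smul_fst]
        · exact heq g u v t hvu
        · simp only [hP3def]
          rw [hKeq g u v _ hvu, Prod.smul_snd]
  · constructor
    · rintro ⟨U, hcov, hU⟩
      refine ⟨U, hcov, fun i => ?_⟩
      obtain ⟨ho, hinv, s, hsec, heq⟩ := hU i
      refine ⟨ho, hinv,
        ⟨⟨fun d => ((d.1 : X × X).1, s d.1 (σ d.2)), ?_⟩, fun u => ?_, fun u => ?_,
          fun g u v t hvu => ?_⟩⟩
      · refine Continuous.prodMk (by fun_prop) ?_
        exact s.uncurry.continuous.comp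
          (continuous_fst.prodMk (continuous_symm.comp continuous_snd))
      · show ((u : X × X).1, s u (σ 0)) = (u : X × X)
        rw [symm_zero]
        have h2 : s u 1 = (u : X × X).2 := congrArg Prod.snd (hsec u)
        rw [h2]
      · show ((u : X × X).1, s u (σ 1)) ∈ Set.diagonal X
        rw [symm_one]
        have h1 : s u 0 = (u : X × X).1 := congrArg Prod.fst (hsec u)
        rw [Set.mem_diagonal_iff, h1]
      · show ((v : X × X).1, s v (σ t)) = g • ((u : X × X).1, s u (σ t))
        rw [heq g u v _ hvu, hvu, Prod.smul_fst]
        rfl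
    · rintro ⟨U, hcov, hU⟩
      refine ⟨U, hcov, fun i => ?_⟩
      obtain ⟨ho, hinv, H, hH0, hH1, hHeq⟩ := hU i
      set P1 : ↥(U i) × I → X := fun d => (H d).1 with hP1def
      set P2 : ↥(U i) × I → X := fun d => (H (d.1, σ d.2)).2 with hP2def
      have hP1 : Continuous P1 := continuous_fst.comp H.continuous
      have hP2 : Continuous P2 :=
        continuous_snd.comp (H.continuous.comp
          (continuous_fst.prodMk (continuous_symm.comp continuous_snd)))
      have j12 : ∀ d, P1 (d, 1) = P2 (d, 0) := by
        intro d
        simp only [hP1def, hP2def, symm_zero]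
        exact hH1 d
      set F : ↥(U i) × I → X := pcat P1 P2 with hFdef
      have hF : Continuous F := pcat_cont hP1 hP2 j12
      refine ⟨ho, hinv, (ContinuousMap.mk F hF).curry, fun u => ?_, fun g u v t hvu => ?_⟩
      · have h0 : F (u, 0) = (u : X × X).1 := by
          rw [hFdef, pcat_zero]
          simp only [hP1def, hH0 u]
        have h1 : F (u, 1) = (u : X × X).2 := by
          rw [hFdef, pcat_one]
          simp only [hP2def, symm_one, hH0 u]
        have : ((ContinuousMap.mk F hF).curry u 0, (ContinuousMap.mk F hF).curry u 1)
            = (F (u, 0), F (u, 1)) := rfl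
        rw [this, h0, h1]
      · show F (v, t) = g • F (u, t)
        refine pcat_equiv g u v (fun t => ?_) (fun t => ?_) t
        · simp only [hP1def]
          rw [hHeq g u v _ hvu, Prod.smul_fst]
        · simp only [hP2def]
          rw [hHeq g u v _ hvu, Prod.smul_snd]

end PaperTC
end

section
/- For a G-space X, the map p:PX×_{ℸ(X)}PX→X×X, p(γ,δ)=(γ(0),δ(1)), is a G×G-fibration, where PX×_{ℸ(X)}PX = {(γ,δ)∈PX×PX : G·γ(1)=G·δ(0)} carries the G×G-action (g₁,g₂)·(γ,δ)=(g₁γ,g₂δ). -/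
open unitInterval Set

namespace PaperTC

variable (G : Type*) {X : Type*} [Group G] [TopologicalSpace X] [MulAction G X]

/-- The action of `G × H` on `X × Y` by `(g,h)•(x,y) = (g•x, h•y)`. -/
instance prodMulAction {G H X Y : Type*} [Monoid G] [Monoid H]
    [MulAction G X] [MulAction H Y] : MulAction (G × H) (X × Y) where
  smul p z := (p.1 • z.1, p.2 • z.2)
  one_smul z := Prod.ext (one_smul _ _) (one_smul _ _)
  mul_smul a b z := Prod.ext (mul_smul _ _ _) (mul_smul _ _ _)

@[simp] theorem prod_smul_def {G H X Y : Type*} [Monoid G] [Monoid H]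
    [MulAction G X] [MulAction H Y] (p : G × H) (z : X × Y) :
    p • z = (p.1 • z.1, p.2 • z.2) := rfl

/-- `ℸ(X) = (G×G)·Δ(X) ⊆ X × X`, the saturation of the diagonal under the
`G × G`-action. -/
def Daleth (G : Type*) {X : Type*} [Group G] [MulAction G X] : Set (X × X) :=
  {p | ∃ (g₁ g₂ : G) (x : X), p = (g₁ • x, g₂ • x)}

/-- The symmetric topological complexity `STC_G(X) = _{ℸ(X)} cat_{G×G}(X × X)`. -/
noncomputable def STC (G : Type*) (X : Type*) [Group G] [TopologicalSpace X]
    [MulAction G X] : ℕ∞ :=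
  Cat (G × G) (Daleth G (X := X))

/-- The fibered product `PX ×_{ℸ(X)} PX = {(γ, δ) : G·γ(1) = G·δ(0)}`. -/
def PPair (G : Type*) (X : Type*) [Group G] [TopologicalSpace X] [MulAction G X] :=
  {p : C(I, X) × C(I, X) // MulAction.orbit G (p.1 1) = MulAction.orbit G (p.2 0)}

instance {G X : Type*} [Group G] [TopologicalSpace X] [MulAction G X] :
    TopologicalSpace (PPair G X) :=
  instTopologicalSpaceSubtype

/-- The endpoint map `p : PX ×_{ℸ(X)} PX → X × X`, `(γ, δ) ↦ (γ(0), δ(1))`. -/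
def pPair {G X : Type*} [Group G] [TopologicalSpace X] [MulAction G X]
    (e : PPair G X) : X × X :=
  (e.1.1 0, e.1.2 1)

section Aux

/-- Projection of `ℝ` onto the unit interval. -/
noncomputable def pr (r : ℝ) : I := Set.projIcc 0 1 zero_le_one r

lemma pr_zero : pr 0 = 0 := Subtype.ext <| by simp [pr]

lemma pr_one : pr 1 = 1 := Subtype.ext <| by simp [pr]

lemma pr_coe (t : I) : pr t = t := Set.projIcc_val zero_le_one t

lemma two_sub_pos' (t : I) : (0 : ℝ) < 2 - t := by
  have := t.2.2; linarith

variable {G : Type*} {X : Type*} [Group G] [TopologicalSpace G]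
    [TopologicalSpace X] [MulAction G X]
variable {Z : Type*} [TopologicalSpace Z]

/-- First coordinate of the lift. -/
noncomputable def F1 (f : C(Z, PPair G X)) (H : C(Z × I, X × X))
    (p : (Z × I) × I) : X :=
  if 2 * (p.2 : ℝ) ≤ (p.1.2 : ℝ) then
    (H (p.1.1, pr ((p.1.2 : ℝ) - 2 * (p.2 : ℝ)))).1
  else
    (f p.1.1).1.1 (pr ((2 * (p.2 : ℝ) - (p.1.2 : ℝ)) / (2 - (p.1.2 : ℝ))))

/-- Second coordinate of the lift. -/
noncomputable def F2 (f : C(Z, PPair G X)) (H : C(Z × I, X × X))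
    (p : (Z × I) × I) : X :=
  if 2 - (p.1.2 : ℝ) ≤ 2 * (p.2 : ℝ) then
    (H (p.1.1, pr ((p.1.2 : ℝ) - 2 * (1 - (p.2 : ℝ))))).2
  else
    (f p.1.1).1.2 (pr (2 * (p.2 : ℝ) / (2 - (p.1.2 : ℝ))))

lemma F1_cont (f : C(Z, PPair G X)) (H : C(Z × I, X × X))
    (hH0 : ∀ z : Z, H (z, 0) = pPair (f z)) : Continuous (F1 f H) := by
  have hc1 : Continuous fun p : (Z × I) × I =>
      (H (p.1.1, pr ((p.1.2 : ℝ) - 2 * (p.2 : ℝ)))).1 := by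
    apply Continuous.fst
    apply H.continuous.comp
    exact (continuous_fst.comp continuous_fst).prodMk
      (continuous_projIcc.comp (by fun_prop))
  have hc2 : Continuous fun p : (Z × I) × I =>
      (f p.1.1).1.1 (pr ((2 * (p.2 : ℝ) - (p.1.2 : ℝ)) / (2 - (p.1.2 : ℝ)))) := by
    have h1 : Continuous fun p : (Z × I) × I => ((f p.1.1).1.1 : C(I, X)) :=
      continuous_fst.comp (continuous_subtype_val.comp
        (f.continuous.comp (continuous_fst.comp continuous_fst)))
    have h2 : Continuous fun p : (Z × I) × I =>
        pr ((2 * (p.2 : ℝ) - (p.1.2 : ℝ)) / (2 - (p.1.2 : ℝ))) := by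
      apply continuous_projIcc.comp
      exact Continuous.div (by fun_prop) (by fun_prop)
        (fun p => ne_of_gt (two_sub_pos' p.1.2))
    exact h1.eval h2
  have key := Continuous.if_le hc1 hc2
    (f := fun p : (Z × I) × I => 2 * (p.2 : ℝ)) (g := fun p => (p.1.2 : ℝ))
    (by fun_prop) (by fun_prop) ?_
  · exact key
  · rintro ⟨⟨z, t⟩, s⟩ hp
    simp only at hp ⊢
    rw [show ((t : ℝ) - 2 * (s : ℝ)) = 0 by linarith,
      show ((2 * (s : ℝ) - (t : ℝ)) / (2 - (t : ℝ))) = 0 by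
        rw [show (2 * (s : ℝ) - (t : ℝ)) = 0 by linarith, zero_div],
      pr_zero, hH0 z]
    rfl

lemma F2_cont (f : C(Z, PPair G X)) (H : C(Z × I, X × X))
    (hH0 : ∀ z : Z, H (z, 0) = pPair (f z)) : Continuous (F2 f H) := by
  have hc1 : Continuous fun p : (Z × I) × I =>
      (H (p.1.1, pr ((p.1.2 : ℝ) - 2 * (1 - (p.2 : ℝ))))).2 := by
    apply Continuous.snd
    apply H.continuous.comp
    exact (continuous_fst.comp continuous_fst).prodMk
      (continuous_projIcc.comp (by fun_prop))
  have hc2 : Continuous fun p : (Z × I) × I =>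
      (f p.1.1).1.2 (pr (2 * (p.2 : ℝ) / (2 - (p.1.2 : ℝ)))) := by
    have h1 : Continuous fun p : (Z × I) × I => ((f p.1.1).1.2 : C(I, X)) :=
      continuous_snd.comp (continuous_subtype_val.comp
        (f.continuous.comp (continuous_fst.comp continuous_fst)))
    have h2 : Continuous fun p : (Z × I) × I =>
        pr (2 * (p.2 : ℝ) / (2 - (p.1.2 : ℝ))) := by
      apply continuous_projIcc.comp
      exact Continuous.div (by fun_prop) (by fun_prop)
        (fun p => ne_of_gt (two_sub_pos' p.1.2))
    exact h1.eval h2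
  have key := Continuous.if_le hc1 hc2
    (f := fun p : (Z × I) × I => 2 - (p.1.2 : ℝ)) (g := fun p => 2 * (p.2 : ℝ))
    (by fun_prop) (by fun_prop) ?_
  · exact key
  · rintro ⟨⟨z, t⟩, s⟩ hp
    simp only at hp ⊢
    rw [show ((t : ℝ) - 2 * (1 - (s : ℝ))) = 0 by linarith,
      show (2 * (s : ℝ) / (2 - (t : ℝ))) = 1 by
        rw [show (2 * (s : ℝ)) = 2 - (t : ℝ) by linarith]
        exact div_self (ne_of_gt (two_sub_pos' t)),
      pr_zero, pr_one, hH0 z]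
    rfl

end Aux

/-- the map `p : PX ×_{ℸ(X)} PX → X × X`, `(γ,δ) ↦ (γ(0), δ(1))`, is a
`G × G`-fibration: it has the homotopy lifting property with respect to
`G × G`-equivariant maps, where `(g₁,g₂)·(γ,δ) = (g₁γ, g₂δ)`. -/
theorem stmt_12 {G : Type v} {X : Type w} [Group G] [TopologicalSpace G] [CompactSpace G]
    [TopologicalSpace X] [MulAction G X] [ContinuousSMul G X] :
    ∀ (Z : Type u) [TopologicalSpace Z] [MulAction (G × G) Z],
      ∀ (f : C(Z, PPair G X)),
        (∀ (g : G × G) (z : Z) (t : I),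
          ((f (g • z)).1.1 t = g.1 • (f z).1.1 t) ∧
          ((f (g • z)).1.2 t = g.2 • (f z).1.2 t)) →
      ∀ (H : C(Z × I, X × X)),
        (∀ (g : G × G) (z : Z) (t : I), H (g • z, t) = g • H (z, t)) →
        (∀ z : Z, H (z, 0) = pPair (f z)) →
      ∃ L : C(Z × I, PPair G X),
        (∀ (g : G × G) (z : Z) (t s : I),
          ((L (g • z, t)).1.1 s = g.1 • (L (z, t)).1.1 s) ∧
          ((L (g • z, t)).1.2 s = g.2 • (L (z, t)).1.2 s)) ∧
        (∀ z : Z, L (z, 0) = f z) ∧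
        (∀ (z : Z) (t : I), pPair (L (z, t)) = H (z, t)) := by
  intro Z _ _ f hf H hH hH0
  have coeI0 : ((0 : I) : ℝ) = 0 := rfl
  have coeI1 : ((1 : I) : ℝ) = 1 := rfl
  set Φ1 : C(Z × I, C(I, X)) :=
    (⟨F1 f H, F1_cont f H hH0⟩ : C((Z × I) × I, X)).curry with hΦ1
  set Φ2 : C(Z × I, C(I, X)) :=
    (⟨F2 f H, F2_cont f H hH0⟩ : C((Z × I) × I, X)).curry with hΦ2
  have hΦ1app : ∀ (p : Z × I) (s : I), Φ1 p s = F1 f H (p, s) := fun _ _ => rfl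
  have hΦ2app : ∀ (p : Z × I) (s : I), Φ2 p s = F2 f H (p, s) := fun _ _ => rfl
  -- endpoint computations
  have h1one : ∀ (z : Z) (t : I), Φ1 (z, t) 1 = (f z).1.1 1 := by
    intro z t
    rw [hΦ1app]
    show F1 f H ((z, t), 1) = _
    unfold F1
    rw [if_neg (by simp only [coeI1]; have := t.2.2; push_neg; linarith)]
    simp only [coeI1]
    rw [show (2 * (1 : ℝ) - (t : ℝ)) / (2 - (t : ℝ)) = 1 by
        rw [show 2 * (1 : ℝ) - (t : ℝ) = 2 - (t : ℝ) by ring]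
        exact div_self (ne_of_gt (two_sub_pos' t)),
      pr_one]
  have h2zero : ∀ (z : Z) (t : I), Φ2 (z, t) 0 = (f z).1.2 0 := by
    intro z t
    rw [hΦ2app]
    show F2 f H ((z, t), 0) = _
    unfold F2
    rw [if_neg (by simp only [coeI0]; have := t.2.2; push_neg; linarith)]
    simp only [coeI0]
    rw [show (2 * (0 : ℝ) / (2 - (t : ℝ))) = 0 by
        rw [mul_zero, zero_div], pr_zero]
  have horb : ∀ p : Z × I, MulAction.orbit G (Φ1 p 1) = MulAction.orbit G (Φ2 p 0) := by
    rintro ⟨z, t⟩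
    rw [h1one, h2zero]
    exact (f z).2
  refine ⟨⟨fun p => ⟨(Φ1 p, Φ2 p), horb p⟩,
      Continuous.subtype_mk (Φ1.continuous.prodMk Φ2.continuous) _⟩, ?_, ?_, ?_⟩
  · -- equivariance
    intro g z t s
    constructor
    · show F1 f H ((g • z, t), s) = g.1 • F1 f H ((z, t), s)
      unfold F1
      split_ifs with h
      · rw [hH g z (pr ((t : ℝ) - 2 * (s : ℝ)))]
        rfl
      · exact (hf g z _).1
    · show F2 f H ((g • z, t), s) = g.2 • F2 f H ((z, t), s)
      unfold F2
      split_ifs with h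
      · rw [hH g z (pr ((t : ℝ) - 2 * (1 - (s : ℝ))))]
        rfl
      · exact (hf g z _).2
  · -- L (z, 0) = f z
    intro z
    apply Subtype.ext
    apply Prod.ext
    · apply ContinuousMap.ext
      intro s
      show F1 f H ((z, 0), s) = (f z).1.1 s
      unfold F1
      split_ifs with h
      · have hs0 : s = 0 := by
          apply Subtype.ext
          simp only [coeI0] at h ⊢
          have := s.2.1; linarith
        subst hs0
        simp only [coeI0]
        rw [show (0 : ℝ) - 2 * 0 = 0 by ring, pr_zero, hH0 z]
        rfl
      · simp only [coeI0]
        rw [show (2 * (s : ℝ) - 0) / (2 - 0) = (s : ℝ) by ring, pr_coe]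
    · apply ContinuousMap.ext
      intro s
      show F2 f H ((z, 0), s) = (f z).1.2 s
      unfold F2
      split_ifs with h
      · have hs1 : s = 1 := by
          apply Subtype.ext
          simp only [coeI0, coeI1] at h ⊢
          have := s.2.2; linarith
        subst hs1
        simp only [coeI0, coeI1]
        rw [show (0 : ℝ) - 2 * (1 - 1) = 0 by ring, pr_zero, hH0 z]
        rfl
      · simp only [coeI0]
        rw [show (2 * (s : ℝ) / (2 - 0)) = (s : ℝ) by ring, pr_coe]
  · -- pPair (L (z, t)) = H (z, t)
    intro z t
    have e1 : F1 f H ((z, t), 0) = (H (z, t)).1 := by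
      unfold F1
      rw [if_pos (by simp only [coeI0]; rw [mul_zero]; exact t.2.1)]
      simp only [coeI0]
      rw [show ((t : ℝ) - 2 * 0) = (t : ℝ) by ring, pr_coe]
    have e2 : F2 f H ((z, t), 1) = (H (z, t)).2 := by
      unfold F2
      rw [if_pos (by simp only [coeI1]; have := t.2.1; linarith)]
      simp only [coeI1]
      rw [show ((t : ℝ) - 2 * (1 - 1)) = (t : ℝ) by ring, pr_coe]
    show ((F1 f H ((z, t), 0)), (F2 f H ((z, t), 1))) = H (z, t)
    rw [e1, e2]

end PaperTC
end
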